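/- Smooth-grid cancellation: let f ∈ C³ and define Δxᵢ = f(φᵢ + h/2) − f(φᵢ − h/2), Δx_{i+1} = f(φᵢ + 3h/2) − f(φᵢ + h/2), Δx_{i−1} = f(φᵢ − h/2) − f(φᵢ − 3h/2) for a smooth strictly increasing map f and uniform step h. Then Δxᵢ²/(Δxᵢ + Δx_{i+1}) − Δx_{i−1}²/(Δxᵢ + Δx_{i−1}) = O(h²) as h → 0, whereas each summand individually is only O(h). -/

import Mathlib

/-!
Write `A = Δxᵢ`, `B = Δx_{i+1}`, `C = Δx_{i−1}`. Then
`A²/(A + B) − C²/(A + C) = ((A − C)(A + C)² + C²(C − B)) / ((A + B)(A + C))`.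
Since `f` is strictly differentiable at `φ` with `f'(φ) ≠ 0`, each increment is of exact
order `h`, so the denominator is of exact order `h²`; `A − C` and `B − A` are second
differences, hence `O(h²)` because `f'` is locally Lipschitz, and the numerator is `O(h⁴)`.
Each summand alone is only bounded by `A` resp. `C`, which are of order `h`.
-/

open Asymptotics Filter Topology Set
open scoped NNReal

theorem sq_div_add_sub_sq_div_add {a b c : ℝ} (hab : a + b ≠ 0) (hac : a + c ≠ 0) :
    a ^ 2 / (a + b) - c ^ 2 / (a + c)
      = ((a - c) * (a + c) ^ 2 + c ^ 2 * (c - b)) / ((a + b) * (a + c)) := by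
  field_simp
  ring

namespace Asymptotics

variable {α : Type*} {l : Filter α} {A B C D u : α → ℝ}

theorem isBigO_self_add_of_nonneg (hA : ∀ᶠ x in l, 0 ≤ A x) (hB : ∀ᶠ x in l, 0 ≤ B x) :
    A =O[l] fun x => A x + B x :=
  IsBigO.of_bound' <| by
    filter_upwards [hA, hB] with x hA hB
    rw [Real.norm_of_nonneg hA, Real.norm_of_nonneg (add_nonneg hA hB)]
    linarith

theorem isBigO_sq_div_of_le (hA : ∀ᶠ x in l, 0 ≤ A x) (hAD : ∀ᶠ x in l, A x ≤ D x)
    (hAu : A =O[l] u) : (fun x => A x ^ 2 / D x) =O[l] u := by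
  refine IsBigO.trans (IsBigO.of_bound' ?_) hAu
  filter_upwards [hA, hAD] with x hA hAD
  rw [Real.norm_of_nonneg (div_nonneg (sq_nonneg _) (hA.trans hAD)), Real.norm_of_nonneg hA]
  rcases hA.eq_or_lt with h | h
  · simp [← h]
  · rw [div_le_iff₀ (h.trans_le hAD), sq]
    exact mul_le_mul_of_nonneg_left hAD hA

theorem isBigO_sq_div_add_sub_sq_div_add (hA : ∀ᶠ x in l, 0 < A x) (hB : ∀ᶠ x in l, 0 ≤ B x)
    (hC : ∀ᶠ x in l, 0 ≤ C x) (hAu : A =Θ[l] u) (hCu : C =O[l] u)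
    (hAC : (fun x => A x - C x) =O[l] fun x => u x ^ 2)
    (hBA : (fun x => B x - A x) =O[l] fun x => u x ^ 2) :
    (fun x => A x ^ 2 / (A x + B x) - C x ^ 2 / (A x + C x)) =O[l] fun x => u x ^ 2 := by
  have hCB : (fun x => C x - B x) =O[l] fun x => u x ^ 2 :=
    (hAC.add hBA).neg_left.congr_left fun x => by ring
  have hnum : (fun x => (A x - C x) * (A x + C x) ^ 2 + C x ^ 2 * (C x - B x))
      =O[l] fun x => u x ^ 2 * u x ^ 2 :=
    (hAC.mul ((hAu.isBigO.add hCu).pow 2)).add ((hCu.pow 2).mul hCB)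
  have hA' : ∀ᶠ x in l, 0 ≤ A x := hA.mono fun _ => le_of_lt
  have hu_AB := hAu.symm.isBigO.trans (isBigO_self_add_of_nonneg hA' hB)
  have hu_AC := hAu.symm.isBigO.trans (isBigO_self_add_of_nonneg hA' hC)
  have hu : ∀ᶠ x in l, u x ≠ 0 := by
    filter_upwards [hA, hAu.isBigO.eq_zero_imp] with x hA hA0 hu using hA.ne' (hA0 hu)
  have hden : (fun x => ((A x + B x) * (A x + C x))⁻¹) =O[l] fun x => (u x ^ 2)⁻¹ := by
    refine ((hu_AB.mul hu_AC).congr_left fun x => (sq (u x)).symm).inv_rev ?_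
    filter_upwards [hu] with x hu hu2 using absurd (pow_eq_zero_iff two_ne_zero |>.1 hu2) hu
  refine (hnum.mul hden).congr' ?_ ?_
  · filter_upwards [hA, hB, hC] with x hA hB hC
    rw [sq_div_add_sub_sq_div_add (by linarith) (by linarith), div_eq_mul_inv]
  · filter_upwards [hu] with x hu
    field_simp

end Asymptotics

theorem abs_sub_sub_sub_le_of_lipschitzOnWith_deriv {f : ℝ → ℝ} {s : Set ℝ} {K : ℝ≥0}
    (hs : Convex ℝ s) (hf : Differentiable ℝ f) (hlip : LipschitzOnWith K (deriv f) s)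
    {p q w : ℝ} (hp : p ∈ s) (hq : q ∈ s) (hw : w ∈ s) (hpqw : p - q = q - w) :
    |f p - f q - (f q - f w)| ≤ K * (p - q) ^ 2 := by
  set δ := p - q
  have hqδ : q + δ = p := by ring
  have hwδ : w + δ = q := by rw [hpqw]; ring
  set S := s ∩ (fun t => t + δ) ⁻¹' s
  have hqS : q ∈ S := ⟨hq, by simpa [hqδ] using hp⟩
  have hwS : w ∈ S := ⟨hw, by simpa [hwδ] using hq⟩
  have hderiv : ∀ t ∈ S, HasDerivWithinAt (fun t => f (t + δ) - f t)
      (deriv f (t + δ) - deriv f t) S t := fun t _ =>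
    (((hf _).hasDerivAt.comp_add_const t δ).sub (hf t).hasDerivAt).hasDerivWithinAt
  have hbound : ∀ t ∈ S, ‖deriv f (t + δ) - deriv f t‖ ≤ K * |δ| := fun t ht => by
    simpa [← dist_eq_norm, Real.dist_eq] using hlip.dist_le_mul _ ht.2 _ ht.1
  have := (hs.inter (hs.translate_preimage_left δ)).norm_image_sub_le_of_norm_hasDerivWithin_le
    hderiv hbound hwS hqS
  rw [Real.norm_eq_abs, Real.norm_eq_abs, hqδ, hwδ, ← hpqw, mul_assoc, ← sq, sq_abs] at this
  exact this

theorem ContDiff.isBigO_sub_sub_sub {α : Type*} {l : Filter α} {f : ℝ → ℝ} (hf : ContDiff ℝ 2 f)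
    {a : ℝ} {p q w u : α → ℝ} (hp : Tendsto p l (𝓝 a)) (hq : Tendsto q l (𝓝 a))
    (hw : Tendsto w l (𝓝 a)) (hpq : ∀ t, p t - q t = u t) (hqw : ∀ t, q t - w t = u t) :
    (fun t => f (p t) - f (q t) - (f (q t) - f (w t))) =O[l] fun t => u t ^ 2 := by
  obtain ⟨K, s, hs, hlip⟩ := (hf.deriv' (n := 1)).contDiffAt.exists_lipschitzOnWith (x := a)
  obtain ⟨ε, hε, hball⟩ := Metric.mem_nhds_iff.1 hs
  have hmem : ∀ {z : α → ℝ}, Tendsto z l (𝓝 a) → ∀ᶠ t in l, z t ∈ Metric.ball a ε :=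
    fun hz => hz (Metric.ball_mem_nhds a hε)
  refine IsBigO.of_bound K ?_
  filter_upwards [hmem hp, hmem hq, hmem hw] with t hp hq hw
  have := abs_sub_sub_sub_le_of_lipschitzOnWith_deriv (convex_ball a ε)
    (hf.differentiable (by norm_num)) (hlip.mono hball) hp hq hw ((hpq t).trans (hqw t).symm)
  rwa [hpq t, ← Real.norm_eq_abs, ← Real.norm_of_nonneg (sq_nonneg (u t))] at this

theorem HasStrictDerivAt.isTheta_sub_comp {α : Type*} {l : Filter α} {f : ℝ → ℝ} {f' a : ℝ}
    (hf : HasStrictDerivAt f f' a) (hf' : f' ≠ 0) {x y u : α → ℝ} (hx : Tendsto x l (𝓝 a))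
    (hy : Tendsto y l (𝓝 a)) (hxy : ∀ t, y t - x t = u t) :
    (fun t => f (y t) - f (x t)) =Θ[l] u := by
  have h := HasDerivAtFilter.isTheta_sub hf hf'
  have hyx := hy.prodMk_nhds hx
  simp only [← funext hxy]
  exact ⟨h.1.comp_tendsto hyx, h.2.comp_tendsto hyx⟩

/-- Smooth-grid cancellation: for a `C³` strictly increasing grid map `f` and uniform
step `h`, with `Δxᵢ = f(φ + h/2) − f(φ − h/2)`, `Δx_{i+1} = f(φ + 3h/2) − f(φ + h/2)`,
`Δx_{i−1} = f(φ − h/2) − f(φ − 3h/2)`, one has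
`Δxᵢ²/(Δxᵢ + Δx_{i+1}) − Δx_{i−1}²/(Δxᵢ + Δx_{i−1}) = O(h²)` as `h → 0⁺`, whereas each
summand individually is only `O(h)`. -/
theorem smooth_grid_cancellation
    (f : ℝ → ℝ) (φ : ℝ) (hf : ContDiff ℝ 3 f) (hf' : ∀ x, 0 < deriv f x) :
    ((fun h : ℝ =>
        (f (φ + h / 2) - f (φ - h / 2)) ^ 2
            / ((f (φ + h / 2) - f (φ - h / 2)) + (f (φ + 3 * h / 2) - f (φ + h / 2)))
          - (f (φ - h / 2) - f (φ - 3 * h / 2)) ^ 2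
            / ((f (φ + h / 2) - f (φ - h / 2)) + (f (φ - h / 2) - f (φ - 3 * h / 2))))
        =O[nhdsWithin 0 (Set.Ioi 0)] fun h => h ^ 2) ∧
    ((fun h : ℝ =>
        (f (φ + h / 2) - f (φ - h / 2)) ^ 2
          / ((f (φ + h / 2) - f (φ - h / 2)) + (f (φ + 3 * h / 2) - f (φ + h / 2))))
        =O[nhdsWithin 0 (Set.Ioi 0)] fun h => h) ∧
    ((fun h : ℝ =>
        (f (φ - h / 2) - f (φ - 3 * h / 2)) ^ 2
          / ((f (φ + h / 2) - f (φ - h / 2)) + (f (φ - h / 2) - f (φ - 3 * h / 2))))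
        =O[nhdsWithin 0 (Set.Ioi 0)] fun h => h) := by
  have hf₂ : ContDiff ℝ 2 f := hf.of_le (by norm_num)
  have hstrict : HasStrictDerivAt f (deriv f φ) φ := hf.contDiffAt.hasStrictDerivAt (by norm_num)
  have hlim : ∀ {g : ℝ → ℝ}, Continuous g → g 0 = φ → Tendsto g (𝓝[>] 0) (𝓝 φ) :=
    fun hg h0 => (hg.tendsto' 0 φ h0).mono_left nhdsWithin_le_nhds
  have hm₃ := hlim (g := fun h => φ - 3 * h / 2) (by fun_prop) (by simp)
  have hm₁ := hlim (g := fun h => φ - h / 2) (by fun_prop) (by simp)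
  have hp₁ := hlim (g := fun h => φ + h / 2) (by fun_prop) (by simp)
  have hp₃ := hlim (g := fun h => φ + 3 * h / 2) (by fun_prop) (by simp)
  have hpos : ∀ {x y : ℝ → ℝ}, (∀ h : ℝ, 0 < h → x h < y h) →
      ∀ᶠ h in 𝓝[>] 0, 0 < f (y h) - f (x h) := fun hxy =>
    eventually_mem_nhdsWithin.mono fun h hh => sub_pos.2 (strictMono_of_deriv_pos hf' (hxy h hh))
  have hA₀ := hpos (x := fun h => φ - h / 2) (y := fun h => φ + h / 2) fun h _ => by linarith
  have hB₀ := hpos (x := fun h => φ + h / 2) (y := fun h => φ + 3 * h / 2) fun h _ => by linarith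
  have hC₀ := hpos (x := fun h => φ - 3 * h / 2) (y := fun h => φ - h / 2) fun h _ => by linarith
  have hA := hstrict.isTheta_sub_comp (hf' φ).ne' hm₁ hp₁ (u := fun h => h) fun h => by ring
  have hC := hstrict.isTheta_sub_comp (hf' φ).ne' hm₃ hm₁ (u := fun h => h) fun h => by ring
  have hAC := hf₂.isBigO_sub_sub_sub hp₁ hm₁ hm₃ (u := fun h => h)
    (fun h => by ring) fun h => by ring
  have hBA := hf₂.isBigO_sub_sub_sub hp₃ hp₁ hm₁ (u := fun h => h)
    (fun h => by ring) fun h => by ring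
  refine ⟨isBigO_sq_div_add_sub_sq_div_add hA₀ (hB₀.mono fun _ => le_of_lt)
      (hC₀.mono fun _ => le_of_lt) hA hC.isBigO hAC hBA, ?_, ?_⟩
  · exact isBigO_sq_div_of_le (hA₀.mono fun _ => le_of_lt)
      (hB₀.mono fun _ hB => by linarith) hA.isBigO
  · exact isBigO_sq_div_of_le (hC₀.mono fun _ => le_of_lt)
      (hA₀.mono fun _ hA => by linarith) hC.isBigO
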